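/- Let r ≥ 2 and k ≥ 2 be fixed integers. There exists a constant C = C(k,r) > 0 such that, asymptotically almost surely as n → ∞, the random Kneser hypergraph KG^r_{n,k}(1/2) contains an empty family A = (A₁, …, A_l) of l = ⌈C·(log₂ n)^{1/(r(k−1))}⌉ pairwise disjoint r-element subsets of [n]. -/

import Mathlib

open Filter

/-- The edge set of the Kneser hypergraph `KG^r_{n,k}`: edges are `r`-element
collections of pairwise disjoint `k`-element subsets of `[n]`. -/
def kneserHyperEdges (n k r : ℕ) : Set (Finset {A : Finset (Fin n) // A.card = k}) :=
  {e | e.card = r ∧ ∀ A ∈ e, ∀ B ∈ e, A ≠ B → Disjoint A.1 B.1}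

/-- The family `A = (A₁, …, A_l)` of pairwise disjoint `r`-sets is *empty* in the
sub-hypergraph with edge set `G`: for each `i`, no edge of `G` consists entirely of
`k`-sets lying inside `A₁ ∪ … ∪ A_i` and meeting `A_i`. -/
def emptyFamilyIn {n k : ℕ} (G : Set (Finset {A : Finset (Fin n) // A.card = k}))
    {l : ℕ} (A : Fin l → Finset (Fin n)) : Prop :=
  ∀ i : Fin l, ∀ e ∈ G,
    ¬ (∀ v ∈ e, v.1 ⊆ (Finset.Iic i).biUnion A ∧ (v.1 ∩ A i).Nonempty)

/-- The fraction of spanning sub-hypergraphs of `KG^r_{n,k}` satisfying `P n`. -/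
noncomputable def kneserHyperFraction (k r : ℕ)
    (P : (n : ℕ) → Set (Finset {A : Finset (Fin n) // A.card = k}) → Prop) (n : ℕ) : ℝ :=
  (Nat.card {E : Set (Finset {A : Finset (Fin n) // A.card = k}) //
      E ⊆ kneserHyperEdges n k r ∧ P n E} : ℝ) /
    2 ^ (kneserHyperEdges n k r).ncard

/-- `KG^r_{n,k}(1/2)` asymptotically almost surely satisfies `P`. -/
def kneserHyperAAS (k r : ℕ)
    (P : (n : ℕ) → Set (Finset {A : Finset (Fin n) // A.card = k}) → Prop) : Prop :=
  Tendsto (kneserHyperFraction k r P) atTop (nhds 1)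

/-!
Cut `[n]` into `l·m` blocks of `r` consecutive elements, `m = ⌊√n⌋`, arranged in `l` levels
of `m` candidate blocks, and choose `A_i` greedily: at level `i`, given `A_1, …, A_{i-1}`, take
a candidate block `B` such that no edge of the random hypergraph consists of `k`-sets inside
`A_1 ∪ … ∪ A_{i-1} ∪ B` meeting `B`. For a fixed history the `m` candidate edge sets are
pairwise disjoint and each has at most `D = (r (r l)^{k-1})^r` edges, and `C` is chosen so that
`D ≤ (log₂ n)/4`; hence all candidates fail with probability at most
`(1 - 2^{-D})^m ≤ exp(1 - n^{1/4})`. A union bound over the `∑_{i<l} m^i ≤ exp(O(log² n))`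
possible histories shows that the greedy choice fails with probability `o(1)`.
-/

open Finset Function

lemma card_filter_powerset_nonempty {α : Type*} [DecidableEq α] (s : Finset α) :
    #{u ∈ s.powerset | u.Nonempty} = 2 ^ #s - 1 := by
  have h : {u ∈ s.powerset | u.Nonempty} = s.powerset.erase ∅ := by
    ext u
    simp [nonempty_iff_ne_empty, and_comm]
  rw [h, card_erase_of_mem (empty_mem_powerset s), card_powerset]

lemma one_sub_inv_two_pow_nonneg (D : ℕ) : 0 ≤ 1 - ((2 : ℝ) ^ D)⁻¹ :=
  sub_nonneg.mpr (inv_le_one_of_one_le₀ (one_le_pow₀ (by norm_num)))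

lemma card_filter_forall_inter_nonempty_le {Ω ι : Type*} [Fintype Ω] [DecidableEq Ω]
    [Fintype ι] [DecidableEq ι] (S : ι → Finset Ω) (hS : Pairwise (Disjoint on S))
    {D : ℕ} (hD : ∀ j, #(S j) ≤ D) :
    (#{G : Finset Ω | ∀ j, (G ∩ S j).Nonempty} : ℝ) ≤
      2 ^ Fintype.card Ω * (1 - ((2 : ℝ) ^ D)⁻¹) ^ Fintype.card ι := by
  set T := univ.biUnion S
  have hT : #T = ∑ j, #(S j) := card_biUnion fun i _ j _ h => hS h
  set traces := Fintype.piFinset (fun j => {u ∈ (S j).powerset | u.Nonempty}) ×ˢ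
    (univ \ T).powerset
  -- a set is recovered from its traces on the `S j` and its part outside their union
  have hinj : #{G : Finset Ω | ∀ j, (G ∩ S j).Nonempty} ≤ #traces := by
    have hdec : ∀ G : Finset Ω, G = (G \ T) ∪ univ.biUnion (fun j => G ∩ S j) := by
      intro G
      ext x
      by_cases hx : ∃ j, x ∈ S j <;> simp_all [T]
    refine card_le_card_of_injOn (fun G => (fun j => G ∩ S j, G \ T)) (fun G hG => ?_)
      fun G _ G' _ h => ?_
    · simpa [traces, inter_subset_right] using hG
    · simp only [Prod.mk.injEq] at h
      rw [hdec G, hdec G', h.1, h.2]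
  have hcard : (#traces : ℝ) = 2 ^ Fintype.card Ω * ∏ j, (1 - ((2 : ℝ) ^ #(S j))⁻¹) := by
    have h2 :
        (2 : ℝ) ^ Fintype.card Ω = 2 ^ (Fintype.card Ω - #T) * ∏ j, (2 : ℝ) ^ #(S j) := by
      rw [prod_pow_eq_pow_sum, ← hT, ← pow_add, Nat.sub_add_cancel (card_le_univ T)]
    rw [card_product, Fintype.card_piFinset, card_powerset, card_sdiff_of_subset (subset_univ T),
      card_univ, h2, mul_assoc, ← prod_mul_distrib]
    push_cast [card_filter_powerset_nonempty, Nat.cast_sub Nat.one_le_two_pow]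
    rw [mul_comm]
    congr 1
    refine prod_congr rfl fun j _ => ?_
    field_simp
  calc (#{G : Finset Ω | ∀ j, (G ∩ S j).Nonempty} : ℝ)
      ≤ 2 ^ Fintype.card Ω * ∏ j, (1 - ((2 : ℝ) ^ #(S j))⁻¹) := by
        rw [← hcard]
        exact_mod_cast hinj
    _ ≤ 2 ^ Fintype.card Ω * ∏ _j : ι, (1 - ((2 : ℝ) ^ D)⁻¹) := by
        gcongr
        · exact fun j _ => one_sub_inv_two_pow_nonneg _
        · norm_num
        · exact hD _
    _ = _ := by rw [prod_const, card_univ]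

lemma card_filter_powersetCard_inter_nonempty_le {α : Type*} [DecidableEq α] (W B : Finset α)
    (k : ℕ) : #{v ∈ W.powersetCard k | (v ∩ B).Nonempty} ≤ #B * #W ^ (k - 1) := by
  have hcover : {v ∈ W.powersetCard k | (v ∩ B).Nonempty} ⊆
      B.biUnion fun b => {v ∈ W.powersetCard k | b ∈ v} := by
    intro v hv
    rw [mem_filter] at hv
    obtain ⟨b, hb⟩ := hv.2
    rw [mem_inter] at hb
    exact mem_biUnion.mpr ⟨b, hb.2, mem_filter.mpr ⟨hv.1, hb.1⟩⟩
  have hb : ∀ b, #{v ∈ W.powersetCard k | b ∈ v} ≤ #W ^ (k - 1) := by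
    intro b
    calc #{v ∈ W.powersetCard k | b ∈ v} ≤ #(W.powersetCard (k - 1)) := by
          refine card_le_card_of_injOn (fun v => v.erase b) (fun v hv => ?_)
            fun v hv v' hv' h => ?_
          · rw [mem_coe, mem_filter, mem_powersetCard] at hv
            simp [mem_powersetCard, card_erase_of_mem hv.2, hv.1.2,
              (erase_subset b v).trans hv.1.1]
          · rw [mem_coe, mem_filter] at hv hv'
            rw [← insert_erase hv.2, ← insert_erase hv'.2]
            exact congrArg (insert b) h
      _ = (#W).choose (k - 1) := card_powersetCard _ _
      _ ≤ #W ^ (k - 1) := Nat.choose_le_pow _ _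
  calc #{v ∈ W.powersetCard k | (v ∩ B).Nonempty}
      ≤ ∑ b ∈ B, #{v ∈ W.powersetCard k | b ∈ v} :=
        (card_le_card hcover).trans card_biUnion_le
    _ ≤ ∑ _b ∈ B, #W ^ (k - 1) := sum_le_sum fun b _ => hb b
    _ = #B * #W ^ (k - 1) := by rw [sum_const, smul_eq_mul]

open scoped Classical in
lemma natCard_subsets_eq_card_filter {X : Type*} (S : Set X) [Fintype S] (Q : Set X → Prop) :
    Nat.card {E : Set X // E ⊆ S ∧ Q E} = #{G : Finset S | Q (Subtype.val '' (G : Set S))} := by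
  rw [← Fintype.card_subtype, ← Nat.card_eq_fintype_card]
  refine Nat.card_congr
    { toFun := fun E => ⟨({x : S | (x : X) ∈ E.1} : Finset S), ?_⟩
      invFun := fun G => ⟨Subtype.val '' (G : Set S), ?_, G.2⟩
      left_inv := fun E => ?_
      right_inv := fun G => ?_ }
  · convert E.2.2
    ext x
    simpa using fun hx => E.2.1 hx
  · rintro _ ⟨x, -, rfl⟩
    exact x.2
  · ext x
    simpa using fun hx => E.2.1 hx
  · ext x
    simp

lemma exists_seq_forall_lt {α : Type*} [Nonempty α]
    (p : (i : ℕ) → (Fin i → α) → α → Prop) (l : ℕ)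
    (h : ∀ i < l, ∀ τ, ∃ a, p i τ a) :
    ∃ σ : ℕ → α, ∀ i < l, p i (fun t => σ t) (σ i) := by
  induction l with
  | zero => exact ⟨fun _ => Classical.arbitrary α, fun i hi => absurd hi (Nat.not_lt_zero i)⟩
  | succ l ih =>
    obtain ⟨σ, hσ⟩ := ih fun i hi => h i (by omega)
    obtain ⟨a, ha⟩ := h l l.lt_succ_self fun t => σ t
    refine ⟨update σ l a, fun i hi => ?_⟩
    have hpre : (fun t : Fin i => update σ l a t) = fun t : Fin i => σ t :=
      funext fun t => update_of_ne (by omega) _ _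
    rw [hpre]
    rcases Nat.lt_succ_iff_lt_or_eq.mp hi with hi | rfl
    · rw [update_of_ne (by omega)]
      exact hσ i hi
    · rwa [update_self]

section Blocks

variable {n r : ℕ}

def block (n r q : ℕ) : Finset (Fin n) := {v | (v : ℕ) / r = q}

lemma map_valEmbedding_block (hr : 0 < r) (q : ℕ) :
    (block n r q).map Fin.valEmbedding = {v ∈ Ico (q * r) (q * r + r) | v < n} := by
  ext v
  simp only [block, Finset.mem_map, mem_filter, mem_univ, true_and, Fin.valEmbedding_apply,
    mem_Ico]
  constructor
  · rintro ⟨v, hv, rfl⟩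
    have := (Nat.div_eq_iff hr).mp hv
    omega
  · rintro ⟨hv, hvn⟩
    exact ⟨⟨v, hvn⟩, (Nat.div_eq_iff hr).mpr (by dsimp only; omega), rfl⟩

lemma card_block_le (hr : 0 < r) (q : ℕ) : #(block n r q) ≤ r := by
  rw [← card_map Fin.valEmbedding, map_valEmbedding_block hr]
  exact (card_filter_le _ _).trans (by simp)

lemma card_block (hr : 0 < r) {q : ℕ} (hq : (q + 1) * r ≤ n) : #(block n r q) = r := by
  rw [← card_map Fin.valEmbedding, map_valEmbedding_block hr,
    filter_true_of_mem fun v hv => by rw [mem_Ico] at hv; linarith, Nat.card_Ico]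
  omega

lemma disjoint_block {q q' : ℕ} (h : q ≠ q') : Disjoint (block n r q) (block n r q') := by
  simp only [block, disjoint_filter]
  exact fun v _ hv hv' => h (hv.symm.trans hv')

lemma mul_add_lt_mul_add_of_lt {m i i' : ℕ} (j j' : Fin m) (h : i < i') :
    i * m + j < i' * m + j' := by
  nlinarith [j.2]

/-- Level `i` offers the `m` candidate blocks `block n r (i * m + j)`, `j : Fin m`; `τ` records
the candidates chosen at the levels below `i`. -/
def prefixUnion (n r : ℕ) {m i : ℕ} (τ : Fin i → Fin m) : Finset (Fin n) :=
  univ.biUnion fun t => block n r (t * m + τ t)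

lemma card_prefixUnion_le (hr : 0 < r) {m i : ℕ} (τ : Fin i → Fin m) :
    #(prefixUnion n r τ) ≤ i * r :=
  card_biUnion_le.trans <| (sum_le_sum fun t _ => card_block_le hr _).trans (by simp)

lemma disjoint_prefixUnion_block {m i : ℕ} (τ : Fin i → Fin m) (j : Fin m) :
    Disjoint (prefixUnion n r τ) (block n r (i * m + j)) :=
  (disjoint_biUnion_left _ _ _).mpr fun t _ =>
    disjoint_block (mul_add_lt_mul_add_of_lt _ _ t.2).ne

end Blocks

section Kneser

open scoped Classical

variable {n k r : ℕ}

lemma kneserHyperFraction_eq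
    (P : (n : ℕ) → Set (Finset {A : Finset (Fin n) // A.card = k}) → Prop) :
    kneserHyperFraction k r P n =
      #{G : Finset (kneserHyperEdges n k r) |
          P n (Subtype.val '' (G : Set (kneserHyperEdges n k r)))} /
        2 ^ Fintype.card (kneserHyperEdges n k r) := by
  rw [kneserHyperFraction, natCard_subsets_eq_card_filter, ← Nat.card_coe_set_eq,
    Nat.card_eq_fintype_card]

lemma kneserHyperFraction_le_one
    (P : (n : ℕ) → Set (Finset {A : Finset (Fin n) // A.card = k}) → Prop) :
    kneserHyperFraction k r P n ≤ 1 := by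
  have h := card_filter_le (univ : Finset (Finset (kneserHyperEdges n k r)))
    fun G => P n (Subtype.val '' (G : Set (kneserHyperEdges n k r)))
  rw [card_univ, Fintype.card_finset] at h
  rw [kneserHyperFraction_eq, div_le_one (by positivity)]
  exact_mod_cast h

/-- The edges of `KG^r_{n,k}` all of whose vertices lie in `U ∪ B` and meet `B`: for
`U = A₁ ∪ … ∪ A_{i-1}` and `B = A_i` these are the edges inside `V_i(A)`. -/
noncomputable def edgesIn (k r : ℕ) (U B : Finset (Fin n)) : Finset (kneserHyperEdges n k r) :=
  {e | ∀ v ∈ e.1, v.1 ⊆ U ∪ B ∧ (v.1 ∩ B).Nonempty}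

lemma disjoint_edgesIn (hr : 0 < r) {U B B' : Finset (Fin n)} (hUB : Disjoint U B)
    (hBB' : Disjoint B B') : Disjoint (edgesIn k r U B) (edgesIn k r U B') := by
  refine disjoint_left.mpr fun e he he' => ?_
  simp only [edgesIn, mem_filter, mem_univ, true_and] at he he'
  obtain ⟨v, hv⟩ := card_pos.mp (by rw [e.2.1]; exact hr : 0 < #e.1)
  obtain ⟨x, hx⟩ := (he v hv).2
  rw [mem_inter] at hx
  rcases mem_union.mp ((he' v hv).1 hx.1) with hxU | hxB'
  · exact disjoint_left.mp hUB hxU hx.2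
  · exact disjoint_left.mp hBB' hx.2 hxB'

lemma card_edgesIn_le (U B : Finset (Fin n)) :
    #(edgesIn k r U B) ≤ (#B * #(U ∪ B) ^ (k - 1)) ^ r := by
  set V : Finset {A : Finset (Fin n) // A.card = k} :=
    {v | v.1 ⊆ U ∪ B ∧ (v.1 ∩ B).Nonempty}
  have hV : #V ≤ #B * #(U ∪ B) ^ (k - 1) := by
    refine le_trans ?_ (card_filter_powersetCard_inter_nonempty_le (U ∪ B) B k)
    rw [← card_map (Embedding.subtype _)]
    refine card_le_card fun w hw => ?_
    obtain ⟨v, hv, rfl⟩ := Finset.mem_map.mp hw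
    simp only [V, mem_filter, mem_univ, true_and] at hv
    simp [mem_powersetCard, hv.1, hv.2, v.2]
  calc #(edgesIn k r U B) ≤ #(V.powersetCard r) := by
        refine card_le_card_of_injOn (fun e => e.1) (fun e he => ?_)
          fun e _ e' _ h => Subtype.ext h
        simp only [edgesIn, coe_filter, mem_univ, true_and] at he
        simp only [mem_coe, mem_powersetCard]
        exact ⟨fun v hv => by simpa [V] using he v hv, e.2.1⟩
    _ = (#V).choose r := card_powersetCard _ _
    _ ≤ #V ^ r := Nat.choose_le_pow _ _
    _ ≤ _ := Nat.pow_le_pow_left hV r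

lemma card_edgesIn_prefixUnion_le (hr : 0 < r) {l m i : ℕ} (hi : i < l) (τ : Fin i → Fin m)
    (j : Fin m) :
    #(edgesIn k r (prefixUnion n r τ) (block n r (i * m + j))) ≤
      (r * (r * l) ^ (k - 1)) ^ r := by
  have hB := card_block_le (n := n) hr (i * m + j)
  have hUB : #(prefixUnion n r τ ∪ block n r (i * m + j)) ≤ r * l :=
    calc _ ≤ i * r + r := (card_union_le _ _).trans (add_le_add (card_prefixUnion_le hr τ) hB)
      _ ≤ r * l := by nlinarith
  exact (card_edgesIn_le _ _).trans (by gcongr)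

def HasEmptyFamily (k r l : ℕ) (E : Set (Finset {A : Finset (Fin n) // A.card = k})) : Prop :=
  ∃ A : Fin l → Finset (Fin n),
    (∀ i, (A i).card = r) ∧ (∀ i j, i ≠ j → Disjoint (A i) (A j)) ∧ emptyFamilyIn E A

lemma emptyFamilyIn_of_forall_disjoint {l : ℕ} {G : Finset (kneserHyperEdges n k r)}
    {A : Fin l → Finset (Fin n)}
    (h : ∀ i, Disjoint G (edgesIn k r ((Iio i).biUnion A) (A i))) :
    emptyFamilyIn (Subtype.val '' (G : Set (kneserHyperEdges n k r))) A := by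
  rintro i _ ⟨e, he, rfl⟩ hall
  refine disjoint_left.mp (h i) he ?_
  simp only [edgesIn, mem_filter, mem_univ, true_and]
  intro v hv
  refine ⟨(hall v hv).1.trans ?_, (hall v hv).2⟩
  rw [← Iio_insert, biUnion_insert, union_comm]

lemma hasEmptyFamily_of_forall_exists_disjoint (hr : 0 < r) {l m : ℕ} (hm : 0 < m)
    (hfit : l * m * r ≤ n) {G : Finset (kneserHyperEdges n k r)}
    (h : ∀ i < l, ∀ τ : Fin i → Fin m, ∃ j : Fin m,
      Disjoint G (edgesIn k r (prefixUnion n r τ) (block n r (i * m + j)))) :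
    HasEmptyFamily k r l (Subtype.val '' (G : Set (kneserHyperEdges n k r))) := by
  have : Nonempty (Fin m) := ⟨⟨0, hm⟩⟩
  obtain ⟨σ, hσ⟩ := exists_seq_forall_lt _ l h
  refine ⟨fun i => block n r (i * m + σ i), fun i => card_block hr ?_, fun i i' hii' => ?_,
    emptyFamilyIn_of_forall_disjoint fun i => ?_⟩
  · have : (i : ℕ) * m + σ i + 1 ≤ l * m := by nlinarith [i.2, (σ i).2]
    nlinarith
  · rcases lt_or_gt_of_ne (Fin.val_ne_of_ne hii') with hlt | hlt
    · exact disjoint_block (mul_add_lt_mul_add_of_lt _ _ hlt).ne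
    · exact disjoint_block (mul_add_lt_mul_add_of_lt _ _ hlt).ne'
  · convert hσ i i.2 using 3
    ext x
    simp only [prefixUnion, mem_biUnion, mem_Iio, mem_univ, true_and]
    constructor
    · rintro ⟨t, ht, hx⟩
      exact ⟨⟨t, ht⟩, hx⟩
    · rintro ⟨t, hx⟩
      exact ⟨⟨t, t.2.trans i.2⟩, Fin.mk_lt_mk.mpr t.2, hx⟩

lemma card_filter_not_hasEmptyFamily_le (hr : 0 < r) {l m : ℕ} (hm : 0 < m)
    (hfit : l * m * r ≤ n) :
    (#{G : Finset (kneserHyperEdges n k r) |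
        ¬ HasEmptyFamily k r l (Subtype.val '' (G : Set (kneserHyperEdges n k r)))} : ℝ) ≤
      l * m ^ l * (1 - ((2 : ℝ) ^ (r * (r * l) ^ (k - 1)) ^ r)⁻¹) ^ m *
        2 ^ Fintype.card (kneserHyperEdges n k r) := by
  set X : ℝ := 2 ^ Fintype.card (kneserHyperEdges n k r) *
    (1 - ((2 : ℝ) ^ (r * (r * l) ^ (k - 1)) ^ r)⁻¹) ^ m
  set hit : (i : ℕ) → (Fin i → Fin m) → Finset (Finset (kneserHyperEdges n k r)) :=
    fun i τ => {G | ∀ j : Fin m,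
      (G ∩ edgesIn k r (prefixUnion n r τ) (block n r (i * m + j))).Nonempty}
  have hX : 0 ≤ X := mul_nonneg (by positivity) (pow_nonneg (one_sub_inv_two_pow_nonneg _) _)
  have hcover : ({G | ¬ HasEmptyFamily k r l
        (Subtype.val '' (G : Set (kneserHyperEdges n k r)))} :
      Finset (Finset (kneserHyperEdges n k r))) ⊆
      (range l).biUnion fun i => univ.biUnion (hit i) := by
    intro G hG
    by_contra hnot
    refine (mem_filter.mp hG).2
      (hasEmptyFamily_of_forall_exists_disjoint hr hm hfit fun i hi τ => ?_)
    by_contra hall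
    push Not at hall
    exact hnot (mem_biUnion.mpr ⟨i, mem_range.mpr hi, mem_biUnion.mpr ⟨τ, mem_univ _,
      mem_filter.mpr ⟨mem_univ _, fun j => not_disjoint_iff_nonempty_inter.mp (hall j)⟩⟩⟩)
  have hhit : ∀ i ∈ range l, ∀ τ : Fin i → Fin m, (#(hit i τ) : ℝ) ≤ X := by
    intro i hi τ
    have h := card_filter_forall_inter_nonempty_le
      (fun j : Fin m => edgesIn k r (prefixUnion n r τ) (block n r (i * m + j)))
      (fun j j' hjj' => disjoint_edgesIn hr (disjoint_prefixUnion_block τ j)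
        (disjoint_block (by have := Fin.val_ne_of_ne hjj'; omega)))
      (card_edgesIn_prefixUnion_le hr (mem_range.mp hi) τ)
    rw [Fintype.card_fin] at h
    convert h using 4
  calc (#{G : Finset (kneserHyperEdges n k r) |
        ¬ HasEmptyFamily k r l (Subtype.val '' (G : Set (kneserHyperEdges n k r)))} : ℝ)
      ≤ ∑ i ∈ range l, ∑ τ : Fin i → Fin m, (#(hit i τ) : ℝ) := by
        exact_mod_cast (card_le_card hcover).trans
          (card_biUnion_le.trans (sum_le_sum fun i _ => card_biUnion_le))
    _ ≤ ∑ _i ∈ range l, (m : ℝ) ^ l * X := by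
        refine sum_le_sum fun i hi => ?_
        calc ∑ τ : Fin i → Fin m, (#(hit i τ) : ℝ) ≤ ∑ _τ : Fin i → Fin m, X :=
              sum_le_sum fun τ _ => hhit i hi τ
          _ = (m : ℝ) ^ i * X := by simp
          _ ≤ (m : ℝ) ^ l * X := by
              gcongr
              · exact_mod_cast hm
              · exact (mem_range.mp hi).le
    _ = _ := by
        rw [sum_const, card_range, nsmul_eq_mul]
        ring

lemma one_sub_le_kneserHyperFraction (hr : 0 < r) {l m : ℕ} (hm : 0 < m)
    (hfit : l * m * r ≤ n)
    (P : (n : ℕ) → Set (Finset {A : Finset (Fin n) // A.card = k}) → Prop)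
    (hP : ∀ E, HasEmptyFamily k r l E → P n E) :
    1 - l * m ^ l * (1 - ((2 : ℝ) ^ (r * (r * l) ^ (k - 1)) ^ r)⁻¹) ^ m ≤
      kneserHyperFraction k r P n := by
  have hsplit := card_filter_add_card_filter_not (s := univ)
    fun G : Finset (kneserHyperEdges n k r) =>
      HasEmptyFamily k r l (Subtype.val '' (G : Set (kneserHyperEdges n k r)))
  rw [card_univ, Fintype.card_finset] at hsplit
  have hcount : 2 ^ Fintype.card (kneserHyperEdges n k r) ≤
      #{G : Finset (kneserHyperEdges n k r) |
        P n (Subtype.val '' (G : Set (kneserHyperEdges n k r)))} +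
      #{G : Finset (kneserHyperEdges n k r) |
        ¬ HasEmptyFamily k r l (Subtype.val '' (G : Set (kneserHyperEdges n k r)))} := by
    rw [← hsplit]
    exact Nat.add_le_add_right (card_le_card (monotone_filter_right _ fun _ _ => hP _)) _
  have hcount' : ((2 ^ Fintype.card (kneserHyperEdges n k r) : ℕ) : ℝ) ≤ _ :=
    Nat.cast_le.mpr hcount
  push_cast at hcount'
  rw [kneserHyperFraction_eq, le_div_iff₀ (by positivity)]
  linarith [card_filter_not_hasEmptyFamily_le (k := k) hr hm hfit]

end Kneser

section Asymptotics

open Real Asymptotics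

lemma tendsto_mul_log_sq_add_sub_rpow_atBot (c d : ℝ) {s : ℝ} (hs : 0 < s) :
    Tendsto (fun y => c * log y ^ 2 + d - y ^ s) atTop atBot := by
  have hs' : Tendsto (fun y : ℝ => y ^ s) atTop atTop := tendsto_rpow_atTop hs
  have hlog : (fun y => log y ^ 2) =o[atTop] fun y => y ^ s :=
    (isLittleO_log_rpow_rpow_atTop 2 hs).congr_left fun y => rpow_two (log y)
  have hd : (fun _ : ℝ => d) =o[atTop] fun y => y ^ s :=
    isLittleO_const_left.mpr (Or.inr (tendsto_norm_atTop_atTop.comp hs'))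
  have hsmall := ((hlog.const_mul_left c).add hd).bound (c := 1 / 2) (by norm_num)
  refine tendsto_atBot_mono' atTop ?_ (tendsto_neg_atTop_atBot.comp (hs'.atTop_div_const two_pos))
  filter_upwards [hsmall, eventually_ge_atTop 0] with y hy hy0
  rw [norm_of_nonneg (rpow_nonneg hy0 s)] at hy
  have := le_abs_self (c * log y ^ 2 + d)
  simp only [Function.comp_apply, norm_eq_abs] at hy ⊢
  linarith

lemma exists_pos_eventually_mul_ceil_pow_le {a : ℕ} (ha : a ≠ 0) {b : ℝ} (hb : 0 < b) :
    ∃ C > 0, ∀ᶠ x : ℝ in atTop, b * (⌈C * x ^ (a : ℝ)⁻¹⌉₊ : ℝ) ^ a ≤ x := by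
  set β := b ^ (a : ℝ)⁻¹
  have hβ : 0 < β := rpow_pos_of_pos hb _
  refine ⟨(2 * β)⁻¹, by positivity, ?_⟩
  have hroot : Tendsto (fun x : ℝ => x ^ (a : ℝ)⁻¹) atTop atTop :=
    tendsto_rpow_atTop (by positivity)
  filter_upwards [hroot.eventually_ge_atTop β, eventually_ge_atTop 0] with x hx hx0
  set y := x ^ (a : ℝ)⁻¹
  have hceil : (⌈(2 * β)⁻¹ * y⌉₊ : ℝ) ≤ β⁻¹ * y := by
    refine (Nat.ceil_le_two_mul ?_).trans_eq (by field_simp)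
    rw [mul_comm, ← div_eq_mul_inv, le_div_iff₀ (by positivity)]
    linarith
  calc b * (⌈(2 * β)⁻¹ * y⌉₊ : ℝ) ^ a ≤ b * (β⁻¹ * y) ^ a := by gcongr
    _ = x := by
        rw [mul_pow, inv_pow, rpow_inv_natCast_pow hb.le ha, rpow_inv_natCast_pow hx0 ha]
        field_simp

lemma exists_pos_eventually_edgeBound_le {k r : ℕ} (hk : 2 ≤ k) (hr : 0 < r) :
    ∃ C > 0, ∀ᶠ n : ℕ in atTop,
      let l := ⌈C * logb 2 n ^ ((1 : ℝ) / ((r : ℝ) * ((k : ℝ) - 1)))⌉₊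
      (((r * (r * l) ^ (k - 1)) ^ r : ℕ) : ℝ) ≤ logb 2 n / 4 := by
  have ha : (k - 1) * r ≠ 0 := Nat.mul_ne_zero (by omega) (by omega)
  have hexp : (1 : ℝ) / ((r : ℝ) * ((k : ℝ) - 1)) = (((k - 1) * r : ℕ) : ℝ)⁻¹ := by
    push_cast [Nat.cast_sub (by omega : 1 ≤ k)]
    ring
  obtain ⟨C, hC, hCx⟩ := exists_pos_eventually_mul_ceil_pow_le ha
    (by positivity : (0 : ℝ) < 4 * r ^ r * r ^ ((k - 1) * r))
  refine ⟨C, hC, ?_⟩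
  filter_upwards [((tendsto_logb_atTop one_lt_two).comp
    tendsto_natCast_atTop_atTop).eventually hCx] with n hn
  rw [Function.comp_apply, ← hexp] at hn
  intro l
  have : (((r * (r * l) ^ (k - 1)) ^ r : ℕ) : ℝ) =
      r ^ r * r ^ ((k - 1) * r) * l ^ ((k - 1) * r) := by
    push_cast
    ring
  linarith

lemma eventually_ceil_mul_rpow_le_mul_log {C e : ℝ} (hC : 0 ≤ C) (he1 : e ≤ 1) :
    ∀ᶠ n : ℕ in atTop, (⌈C * logb 2 n ^ e⌉₊ : ℝ) ≤ (C / log 2 + 1) * log n := by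
  have hlog2 : 0 < log 2 := log_pos one_lt_two
  have hlog : Tendsto (fun n : ℕ => log n) atTop atTop :=
    tendsto_log_atTop.comp tendsto_natCast_atTop_atTop
  filter_upwards [hlog.eventually_ge_atTop 1] with n hn
  have hx1 : 1 ≤ logb 2 n := by rw [logb, le_div_iff₀ hlog2]; linarith [log_two_lt_d9]
  have hxe : logb 2 n ^ e ≤ logb 2 n := by
    simpa using rpow_le_rpow_of_exponent_le hx1 he1
  calc (⌈C * logb 2 n ^ e⌉₊ : ℝ) ≤ C * logb 2 n + 1 :=
        (Nat.ceil_lt_add_one (by positivity)).le.trans (by gcongr)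
    _ ≤ (C / log 2 + 1) * log n := by
        rw [logb, add_mul, mul_div_assoc', div_mul_eq_mul_div]
        linarith

lemma natCast_mul_pow_le_exp {l m n : ℕ} {c : ℝ} (hm : 2 ≤ m) (hmn : m ≤ n)
    (hl : (l : ℝ) ≤ c * log n) : (l : ℝ) * m ^ l ≤ exp (2 * c * log n ^ 2) := by
  have hnat : l * m ^ l ≤ n ^ (2 * l) :=
    calc l * m ^ l ≤ m ^ l * m ^ l :=
          Nat.mul_le_mul_right _ ((Nat.lt_two_pow_self).le.trans (Nat.pow_le_pow_left hm l))
      _ = m ^ (2 * l) := by ring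
      _ ≤ n ^ (2 * l) := Nat.pow_le_pow_left hmn _
  have hn : (0 : ℝ) < n := by exact_mod_cast (by omega : 0 < n)
  calc (l : ℝ) * m ^ l ≤ (n : ℝ) ^ (2 * l) := by exact_mod_cast hnat
    _ = exp ((2 * l : ℕ) * log n) := by rw [exp_nat_mul, exp_log hn]
    _ ≤ exp (2 * c * log n ^ 2) := by
        have hlog : 0 ≤ log n := log_nonneg (by exact_mod_cast (by omega : 1 ≤ n))
        refine exp_le_exp.mpr ?_
        push_cast
        nlinarith [mul_le_mul_of_nonneg_right hl hlog]

lemma one_sub_inv_two_pow_pow_sqrt_le_exp {n D : ℕ} (hn : 1 ≤ n)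
    (hD : (D : ℝ) ≤ logb 2 n / 4) :
    (1 - ((2 : ℝ) ^ D)⁻¹) ^ Nat.sqrt n ≤ exp (1 - (n : ℝ) ^ (1 / 4 : ℝ)) := by
  have hn0 : (0 : ℝ) < n := by exact_mod_cast hn
  set s := (n : ℝ) ^ (1 / 4 : ℝ)
  have hs1 : 1 ≤ s := one_le_rpow (by exact_mod_cast hn) (by norm_num)
  have hsqrt : √(n : ℝ) = s ^ 2 := by
    rw [sqrt_eq_rpow, ← rpow_natCast, ← rpow_mul hn0.le]; norm_num
  have h2D : (2 : ℝ) ^ D ≤ s := by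
    calc (2 : ℝ) ^ D = 2 ^ (D : ℝ) := (rpow_natCast 2 D).symm
      _ ≤ 2 ^ (logb 2 n * (1 / 4)) := by gcongr <;> [norm_num; linarith]
      _ = s := by rw [rpow_mul (by norm_num : (0 : ℝ) ≤ 2), rpow_logb two_pos (by norm_num) hn0]
  have hm : s ^ 2 - 1 ≤ Nat.sqrt n := by
    linarith [real_sqrt_le_nat_sqrt_succ (a := n)]
  have hq : s - 1 ≤ Nat.sqrt n * ((2 : ℝ) ^ D)⁻¹ := by
    calc s - 1 ≤ (s ^ 2 - 1) * s⁻¹ := by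
          rw [sub_mul, ← div_eq_mul_inv, ← div_eq_mul_inv, pow_two, mul_div_assoc,
            div_self (by positivity), mul_one]
          linarith [(div_le_one (by positivity : 0 < s)).mpr hs1]
      _ ≤ Nat.sqrt n * ((2 : ℝ) ^ D)⁻¹ := by gcongr
  calc (1 - ((2 : ℝ) ^ D)⁻¹) ^ Nat.sqrt n ≤ exp (-((2 : ℝ) ^ D)⁻¹) ^ Nat.sqrt n := by
        gcongr
        · exact one_sub_inv_two_pow_nonneg D
        · linarith [add_one_le_exp (-((2 : ℝ) ^ D)⁻¹)]
    _ = exp (-(Nat.sqrt n * ((2 : ℝ) ^ D)⁻¹)) := by rw [← exp_nat_mul, mul_neg]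
    _ ≤ exp (1 - s) := by gcongr; linarith

lemma tendsto_mul_sqrt_pow_mul_one_sub_inv_two_pow {c : ℝ} {l D : ℕ → ℕ}
    (hl : ∀ᶠ n : ℕ in atTop, (l n : ℝ) ≤ c * log n)
    (hD : ∀ᶠ n : ℕ in atTop, (D n : ℝ) ≤ logb 2 n / 4) :
    Tendsto
      (fun n : ℕ => (l n : ℝ) * Nat.sqrt n ^ l n * (1 - ((2 : ℝ) ^ D n)⁻¹) ^ Nat.sqrt n)
      atTop (nhds 0) := by
  refine squeeze_zero' (Eventually.of_forall fun n => ?_) ?_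
    ((tendsto_exp_atBot.comp (tendsto_mul_log_sq_add_sub_rpow_atBot (2 * c) 1
      (by norm_num : (0 : ℝ) < 1 / 4))).comp tendsto_natCast_atTop_atTop)
  · have := one_sub_inv_two_pow_nonneg (D n)
    positivity
  filter_upwards [hl, hD, eventually_ge_atTop 4] with n hln hDn hn
  have hm : 2 ≤ Nat.sqrt n := Nat.le_sqrt.mpr hn
  calc (l n : ℝ) * Nat.sqrt n ^ l n * (1 - ((2 : ℝ) ^ D n)⁻¹) ^ Nat.sqrt n
      ≤ exp (2 * c * log n ^ 2) * exp (1 - (n : ℝ) ^ (1 / 4 : ℝ)) := by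
        refine mul_le_mul (natCast_mul_pow_le_exp hm (Nat.sqrt_le_self n) hln)
          (one_sub_inv_two_pow_pow_sqrt_le_exp (by omega) hDn) ?_ (exp_pos _).le
        exact pow_nonneg (one_sub_inv_two_pow_nonneg _) _
    _ = _ := by rw [← exp_add, Function.comp_apply, Function.comp_apply, add_sub_assoc]

lemma eventually_mul_sqrt_mul_le {c : ℝ} {l : ℕ → ℕ}
    (hl : ∀ᶠ n : ℕ in atTop, (l n : ℝ) ≤ c * log n) (r : ℕ) :
    ∀ᶠ n : ℕ in atTop, l n * Nat.sqrt n * r ≤ n := by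
  have hlog : Tendsto (fun n : ℕ => log n) atTop atTop :=
    tendsto_log_atTop.comp tendsto_natCast_atTop_atTop
  filter_upwards [hl, hlog.eventually_ge_atTop 1,
    ((tendsto_mul_log_sq_add_sub_rpow_atBot (c * r) 1 (by norm_num : (0 : ℝ) < 1 / 2)).comp
      tendsto_natCast_atTop_atTop).eventually_le_atBot 0] with n hln hlog1 hsmall
  simp only [Function.comp_apply] at hsmall
  have hlr : (l n * r : ℝ) + 1 ≤ √(n : ℝ) := by
    rw [sqrt_eq_rpow]
    have : (l n * r : ℝ) ≤ c * r * log n ^ 2 := by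
      have hlr := mul_le_mul_of_nonneg_right hln (Nat.cast_nonneg r)
      have hpos : 0 ≤ c * log n * r := le_trans (by positivity) hlr
      nlinarith [mul_nonneg hpos (sub_nonneg.mpr hlog1)]
    linarith
  have hlrN : l n * r ≤ Nat.sqrt n := by
    have := real_sqrt_le_nat_sqrt_succ (a := n)
    exact_mod_cast (by linarith : (l n * r : ℝ) ≤ Nat.sqrt n)
  calc l n * Nat.sqrt n * r = l n * r * Nat.sqrt n := by ring
    _ ≤ Nat.sqrt n * Nat.sqrt n := Nat.mul_le_mul_right _ hlrN
    _ ≤ n := Nat.sqrt_le n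

end Asymptotics

/-- For fixed `r, k ≥ 2` there is `C > 0` such that a.a.s. `KG^r_{n,k}(1/2)` contains an
empty family of `l = ⌈C·(log₂ n)^{1/(r(k−1))}⌉` pairwise disjoint `r`-element subsets
of `[n]`. -/
theorem empty_family_exists_aas (k r : ℕ) (hk : 2 ≤ k) (hr : 2 ≤ r) :
    ∃ C : ℝ, 0 < C ∧
      kneserHyperAAS k r (fun n E =>
        ∃ A : Fin ⌈C * Real.logb 2 n ^ ((1 : ℝ) / ((r : ℝ) * ((k : ℝ) - 1)))⌉₊ →
            Finset (Fin n),
          (∀ i, (A i).card = r) ∧ (∀ i j, i ≠ j → Disjoint (A i) (A j)) ∧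
          emptyFamilyIn E A) := by
  obtain ⟨C, hC, hD⟩ := exists_pos_eventually_edgeBound_le hk (by omega : 0 < r)
  refine ⟨C, hC, ?_⟩
  have hk' : (2 : ℝ) ≤ k := by exact_mod_cast hk
  have hr' : (2 : ℝ) ≤ r := by exact_mod_cast hr
  have hl := eventually_ceil_mul_rpow_le_mul_log hC.le
    ((div_le_one (by nlinarith)).mpr (by nlinarith) : 1 / ((r : ℝ) * ((k : ℝ) - 1)) ≤ 1)
  have hlower := (tendsto_const_nhds (x := (1 : ℝ))).sub
    (tendsto_mul_sqrt_pow_mul_one_sub_inv_two_pow hl hD)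
  rw [sub_zero] at hlower
  refine tendsto_of_tendsto_of_tendsto_of_le_of_le' hlower tendsto_const_nhds ?_
    (Eventually.of_forall fun _ => kneserHyperFraction_le_one _)
  filter_upwards [eventually_mul_sqrt_mul_le hl r, eventually_ge_atTop 1] with n hfit hn
  exact one_sub_le_kneserHyperFraction (by omega) (Nat.sqrt_pos.mpr hn) hfit _ fun _ h => h
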